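/- arXiv:1911.06625 — 2 statements merged into one kernel-verified Lean document; each statement's English description precedes it below -/
import Mathlib

section
/- Let a be an atom of a wEMV-algebra (M; ∨, ∧, ⊕, ⊖, 0) such that n.a is not idempotent for any integer n ≥ 1. Then the map n ↦ n.a from ℕ to M is injective and, for all m, n ∈ ℕ: m.a ⊕ n.a = (m+n).a, m.a ⊖ n.a = (m ∸ n).a (where ∸ is truncated subtraction on ℕ), m.a ∨ n.a = (max(m,n)).a, and m.a ∧ n.a = (min(m,n)).a; that is, {m.a : m ∈ ℕ} is a subalgebra of M isomorphic to the wEMV-algebra of the positive cone ℤ⁺. -/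
universe u

class WEMV (M : Type u) extends DistribLattice M, Zero M where
  oplus : M → M → M
  ominus : M → M → M
  zero_le : ∀ x : M, 0 ≤ x
  oplus_comm : ∀ x y : M, oplus x y = oplus y x
  oplus_assoc : ∀ x y z : M, oplus (oplus x y) z = oplus x (oplus y z)
  oplus_zero : ∀ x : M, oplus x 0 = x
  ominus_oplus_le : ∀ x y : M, ominus (oplus x y) x ≤ y
  oplus_ominus : ∀ x y : M, oplus x (ominus y x) = x ⊔ y
  ominus_inf : ∀ x y : M, ominus x (x ⊓ y) = ominus x y
  ominus_ominus : ∀ x z : M, ominus z (ominus z x) = x ⊓ z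
  ominus_sup : ∀ x y z : M, ominus z (x ⊔ y) = ominus z x ⊓ ominus z y
  inf_ominus : ∀ x y z : M, ominus (x ⊓ y) z = ominus x z ⊓ ominus y z
  ominus_oplus_assoc : ∀ x y z : M, ominus x (oplus y z) = ominus (ominus x y) z
  oplus_sup : ∀ x y z : M, oplus x (y ⊔ z) = oplus x y ⊔ oplus x z

open WEMV

def nmul {M : Type u} [WEMV M] : ℕ → M → M
  | 0, _ => 0
  | n + 1, a => oplus (nmul n a) a

/-!
Write `n.a` for `nmul n a`. If `n.a ⊕ a = n.a`, the multiples of `a` are constant from `n` on, so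
`(n+1).a` would be idempotent; hence the multiples strictly increase. The core fact is
`(m+1).a ⊖ a = m.a`, proved by induction on `m`: for an atom `a`, anything between `x` and
`x ⊕ a` is one of the two ends, and `(m+2).a ⊖ a` lies between `m.a` and `(m+1).a` without
being `m.a`. Iterating it via `x ⊖ (y ⊕ z) = (x ⊖ y) ⊖ z` gives `m.a ⊖ n.a = (m ∸ n).a`; the
lattice operations come from monotonicity.
-/

namespace WEMV

variable {M : Type u} [WEMV M]

theorem zero_oplus (x : M) : oplus 0 x = x := by
  rw [oplus_comm, oplus_zero]

theorem ominus_self (x : M) : ominus x x = 0 :=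
  le_antisymm (by simpa only [oplus_zero] using ominus_oplus_le x 0) (WEMV.zero_le _)

theorem ominus_zero (x : M) : ominus x 0 = x := by
  simpa only [ominus_self, inf_idem] using ominus_ominus x x

theorem zero_ominus (x : M) : ominus 0 x = 0 := by
  rw [← ominus_inf, inf_eq_left.mpr (WEMV.zero_le x), ominus_self]

theorem le_oplus (x y : M) : x ≤ oplus x y := by
  have h := oplus_sup x 0 y
  rw [sup_eq_right.mpr (WEMV.zero_le y), oplus_zero] at h
  exact h ▸ le_sup_left

theorem ominus_le_ominus_left {x y : M} (z : M) (h : x ≤ y) : ominus x z ≤ ominus y z := by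
  rw [← inf_eq_left.mpr h, inf_ominus]
  exact inf_le_right

theorem oplus_ominus_of_le {x y : M} (h : x ≤ y) : oplus x (ominus y x) = y := by
  rw [oplus_ominus, sup_eq_right.mpr h]

theorem eq_or_eq_oplus_of_le_of_le_oplus {a x d : M} (hatom : ∀ c : M, 0 < c → c ≤ a → c = a)
    (hxd : x ≤ d) (hdx : d ≤ oplus x a) : d = x ∨ d = oplus x a := by
  have hd : oplus x (ominus d x) = d := oplus_ominus_of_le hxd
  have hle : ominus d x ≤ a := (ominus_le_ominus_left x hdx).trans (ominus_oplus_le x a)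
  rcases (WEMV.zero_le (ominus d x)).eq_or_lt with h0 | hpos
  · left
    rw [← hd, ← h0, oplus_zero]
  · right
    rw [← hd, hatom _ hpos hle]

end WEMV

open WEMV

section Multiples

variable {M : Type u} [WEMV M] {a : M}

theorem nmul_zero (a : M) : nmul 0 a = 0 := rfl

theorem nmul_succ (n : ℕ) (a : M) : nmul (n + 1) a = oplus (nmul n a) a := rfl

theorem nmul_one (a : M) : nmul 1 a = a := zero_oplus a

theorem nmul_add (m n : ℕ) (a : M) : nmul (m + n) a = oplus (nmul m a) (nmul n a) := by
  induction n with
  | zero => exact (oplus_zero _).symm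
  | succ n ih => rw [← add_assoc, nmul_succ, nmul_succ, ih, oplus_assoc]

theorem nmul_monotone (a : M) : Monotone (fun n => nmul n a) :=
  monotone_nat_of_le_succ fun _ => le_oplus _ _

theorem nmul_add_eq_of_oplus_eq {n : ℕ} (h : oplus (nmul n a) a = nmul n a) (k : ℕ) :
    nmul (n + k) a = nmul n a := by
  induction k with
  | zero => rfl
  | succ k ih => rw [← add_assoc, nmul_succ, ih, h]

theorem nmul_succ_ne_of_not_idempotent
    (hnid : ∀ n : ℕ, 1 ≤ n → oplus (nmul n a) (nmul n a) ≠ nmul n a) (n : ℕ) :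
    nmul (n + 1) a ≠ nmul n a := by
  intro h
  have hstable := nmul_add_eq_of_oplus_eq h
  apply hnid (n + 1) n.succ_pos
  rw [← nmul_add, add_assoc, hstable, ← hstable 1]

theorem nmul_strictMono (hne : ∀ n : ℕ, nmul (n + 1) a ≠ nmul n a) :
    StrictMono (fun n => nmul n a) :=
  strictMono_nat_of_lt_succ fun n => (le_oplus _ _).lt_of_ne (hne n).symm

theorem nmul_succ_ominus (hatom : ∀ c : M, 0 < c → c ≤ a → c = a)
    (hne : ∀ n : ℕ, nmul (n + 1) a ≠ nmul n a) (m : ℕ) :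
    ominus (nmul (m + 1) a) a = nmul m a := by
  induction m with
  | zero => rw [nmul_one, ominus_self, nmul_zero]
  | succ m ih =>
    have hlower : nmul m a ≤ ominus (nmul (m + 2) a) a :=
      ih ▸ ominus_le_ominus_left a (nmul_monotone a (by omega))
    have hupper : ominus (nmul (m + 2) a) a ≤ nmul (m + 1) a := by
      simpa only [nmul_succ, oplus_comm a] using ominus_oplus_le a (nmul (m + 1) a)
    have hcancel : oplus a (ominus (nmul (m + 2) a) a) = nmul (m + 2) a :=
      oplus_ominus_of_le (by simpa only [nmul_one] using nmul_monotone a (by omega : 1 ≤ m + 2))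
    refine (eq_or_eq_oplus_of_le_of_le_oplus hatom hlower hupper).resolve_left fun h => ?_
    apply hne (m + 1)
    rw [← hcancel, h, oplus_comm, nmul_succ]

theorem nmul_ominus_self (hatom : ∀ c : M, 0 < c → c ≤ a → c = a)
    (hne : ∀ n : ℕ, nmul (n + 1) a ≠ nmul n a) : ∀ k : ℕ, ominus (nmul k a) a = nmul (k - 1) a
  | 0 => zero_ominus a
  | m + 1 => nmul_succ_ominus hatom hne m

theorem nmul_ominus_nmul (hatom : ∀ c : M, 0 < c → c ≤ a → c = a)
    (hne : ∀ n : ℕ, nmul (n + 1) a ≠ nmul n a) (m n : ℕ) :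
    ominus (nmul m a) (nmul n a) = nmul (m - n) a := by
  induction n with
  | zero => exact ominus_zero _
  | succ n ih => rw [nmul_succ, ominus_oplus_assoc, ih, nmul_ominus_self hatom hne, Nat.sub_sub]

end Multiples

theorem stmt5_general {M : Type u} [WEMV M] (a : M)
    (hatom : ∀ c : M, 0 < c → c ≤ a → c = a)
    (hnid : ∀ n : ℕ, 1 ≤ n → oplus (nmul n a) (nmul n a) ≠ nmul n a) :
    Function.Injective (fun n : ℕ => nmul n a) ∧
    (∀ m n : ℕ, oplus (nmul m a) (nmul n a) = nmul (m + n) a) ∧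
    (∀ m n : ℕ, ominus (nmul m a) (nmul n a) = nmul (m - n) a) ∧
    (∀ m n : ℕ, nmul m a ⊔ nmul n a = nmul (max m n) a) ∧
    (∀ m n : ℕ, nmul m a ⊓ nmul n a = nmul (min m n) a) := by
  have hne := nmul_succ_ne_of_not_idempotent hnid
  exact ⟨(nmul_strictMono hne).injective, fun m n => (nmul_add m n a).symm,
    nmul_ominus_nmul hatom hne, fun m n => ((nmul_monotone a).map_sup m n).symm,
    fun m n => ((nmul_monotone a).map_inf m n).symm⟩

theorem stmt5 {M : Type u} [WEMV M] (a : M)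
    (ha0 : a ≠ 0) (hatom : ∀ c : M, 0 < c → c ≤ a → c = a)
    (hnid : ∀ n : ℕ, 1 ≤ n → oplus (nmul n a) (nmul n a) ≠ nmul n a) :
    Function.Injective (fun n : ℕ => nmul n a) ∧
    (∀ m n : ℕ, oplus (nmul m a) (nmul n a) = nmul (m + n) a) ∧
    (∀ m n : ℕ, ominus (nmul m a) (nmul n a) = nmul (m - n) a) ∧
    (∀ m n : ℕ, nmul m a ⊔ nmul n a = nmul (max m n) a) ∧
    (∀ m n : ℕ, nmul m a ⊓ nmul n a = nmul (min m n) a) :=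
  stmt5_general a hatom hnid
end

section
/- In each wEMV-algebra (M; ∨, ∧, ⊕, ⊖, 0) the following inequality holds for all x, y, z ∈ M: x ⊖ z ≤ (x ⊖ y) ⊕ (y ⊖ z). -/
universe u

open WEMV

namespace WEMV

variable {M : Type u} [WEMV M]

theorem oplus_le_oplus_left {y z : M} (h : y ≤ z) (x : M) : oplus x y ≤ oplus x z := by
  rw [← sup_eq_right.mpr h, oplus_sup]
  exact le_sup_left

theorem le_oplus_ominus (x y : M) : x ≤ oplus y (ominus x y) :=
  oplus_ominus y x ▸ le_sup_right

theorem ominus_right_comm (x y z : M) : ominus (ominus x y) z = ominus (ominus x z) y := by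
  rw [← ominus_oplus_assoc, oplus_comm, ominus_oplus_assoc]

theorem ominus_ominus_ominus_le (x y z : M) :
    ominus (ominus x z) (ominus x y) ≤ ominus y z := by
  rw [ominus_right_comm, ominus_ominus, inf_ominus]
  exact inf_le_left

end WEMV

theorem stmt8 {M : Type u} [WEMV M] (x y z : M) :
    ominus x z ≤ oplus (ominus x y) (ominus y z) :=
  (le_oplus_ominus _ _).trans <| oplus_le_oplus_left (ominus_ominus_ominus_le x y z) _
end
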